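/- (Theorem 2, necessity direction) Let ν be a rationalizing distribution for (X,P). Suppose there exist linear orders π, π' with ν(π) > 0, ν(π') > 0, and elements x, y, z ∈ X with x ≠ y such that both π and π' rank both x and y above z, U_π(z) ≠ U_{π'}(z), and U_π(x) = U_{π'}(y) (where U denotes weak upper contour set). Then the associated paths of π and π' form a pair of supported branching paths on the probability flow diagram, and hence ν is not the unique rationalizing distribution. -/

import Mathlib

open Finset
open scoped Classical

/-- A linear order on a finite set `α`, encoded as a ranking bijection to `Fin (card α)`;
higher value means more preferred. -/
abbrev RankOrd (α : Type*) [Fintype α] := α ≃ Fin (Fintype.card α)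

variable {α : Type*} [Fintype α] [DecidableEq α]

/-- `ν` is a probability distribution over linear orders. -/
def IsDist [Fintype α] (ν : RankOrd α → ℝ) : Prop :=
  (∀ π, 0 ≤ ν π) ∧ ∑ π : RankOrd α, ν π = 1

/-- The choice probabilities induced by a distribution over linear orders. -/
noncomputable def choiceProb (ν : RankOrd α → ℝ) (A : Finset α) (x : α) : ℝ :=
  ∑ π : RankOrd α, if ∀ y ∈ A, y ≠ x → (π y : ℕ) < (π x : ℕ) then ν π else 0

/-- `ν` rationalizes the system of choice probabilities `P`. -/
def Rationalizes (ν : RankOrd α → ℝ) (P : Finset α → α → ℝ) : Prop :=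
  IsDist ν ∧ ∀ A : Finset α, A.Nonempty → ∀ x ∈ A, P A x = choiceProb ν A x

/-- The Block–Marschak polynomial `q(x,A)` of a system of choice probabilities `P`. -/
noncomputable def bm (P : Finset α → α → ℝ) (x : α) (A : Finset α) : ℝ :=
  ∑ A' ∈ Finset.univ.powerset.filter (fun A' => A ⊆ A'),
    (-1 : ℝ) ^ (A' \ A).card * P A' x

/-- A path: a maximal chain `X = A_0 ⊋ A_1 ⊋ ⋯ ⊋ A_{|X|} = ∅` decreasing by one element. -/
def IsPath (ρ : ℕ → Finset α) : Prop :=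
  ρ 0 = Finset.univ ∧ ρ (Fintype.card α) = ∅ ∧
    ∀ i < Fintype.card α, ρ (i + 1) ⊆ ρ i ∧ (ρ i \ ρ (i + 1)).card = 1

/-- A supported path: all Block–Marschak edge weights along it are strictly positive. -/
def SupportedPath (P : Finset α → α → ℝ) (ρ : ℕ → Finset α) : Prop :=
  IsPath ρ ∧ ∀ i < Fintype.card α, ∀ x ∈ ρ i \ ρ (i + 1), 0 < bm P x (ρ i)

/-- Two paths are branching: they agree on a consecutive block of nodes
`{i,…,j} ⊆ {1,…,|X|-1}` while differing at positions `i-1` and `j+1`. -/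
def BranchingPair (ρ ρ' : ℕ → Finset α) : Prop :=
  ∃ i j, 1 ≤ i ∧ i ≤ j ∧ j ≤ Fintype.card α - 1 ∧
    ρ (i - 1) ≠ ρ' (i - 1) ∧ ρ (j + 1) ≠ ρ' (j + 1) ∧
    ∀ m, i ≤ m → m ≤ j → ρ m = ρ' m

/-- The path associated with the linear order `π`: `A_i` is `X` minus the top `i` elements. -/
def pathOf (π : RankOrd α) : ℕ → Finset α :=
  fun i => Finset.univ.filter (fun w => (π w : ℕ) < Fintype.card α - i)

/-- The weak upper contour set of `x` according to `π`. -/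
def upper (π : RankOrd α) (x : α) : Finset α :=
  Finset.univ.filter (fun w => (π x : ℕ) ≤ (π w : ℕ))

/-- `π ∈ M_{x,A}`: `π` ranks `X \ A` above `x` and `x` above `A \ {x}`. -/
def inM (π : RankOrd α) (x : α) (A : Finset α) : Prop :=
  (∀ z, z ∉ A → (π x : ℕ) < (π z : ℕ)) ∧ ∀ y ∈ A, y ≠ x → (π y : ℕ) < (π x : ℕ)

/-!
Write `r` for the common rank `π x = π' y` (the contour sets `U_π(x) = U_{π'}(y)` have the same
size), so `π` and `π'` share the top segment `T = {w | r ≤ π w}`. They differ on `T` (at `x`) and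
below it (otherwise `U_π(z) = U_{π'}(z)`). Hence their paths agree at step `|T|`, differ just
before it and again somewhere after it. Each path is supported because the Block–Marschak weight
`q(w, A)` is the `ν`-mass of `M_{w,A}`, and the order itself lies in that set.

Exchanging the parts of `π` and `π'` below `T` gives orders `σ`, `σ'` such that `δ_σ + δ_σ'` and
`δ_π + δ_π'` induce the same choice probabilities: a menu meeting `T` is decided on `T`, any
other menu below `T`. Moving mass `min (ν π) (ν π')` from `π, π'` to `σ, σ'` therefore yields a
second rationalizing distribution.
-/

abbrev IsBest (τ : RankOrd α) (A : Finset α) (x : α) : Prop :=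
  ∀ y ∈ A, y ≠ x → (τ y : ℕ) < (τ x : ℕ)

theorem choiceProb_eq_sum_isBest (ν : RankOrd α → ℝ) (A : Finset α) (x : α) :
    choiceProb ν A x = ∑ τ, if IsBest τ A x then ν τ else 0 := rfl

section
omit [DecidableEq α]

theorem mem_pathOf {π : RankOrd α} {i : ℕ} {w : α} :
    w ∈ pathOf π i ↔ (π w : ℕ) < Fintype.card α - i := by
  simp [pathOf]

theorem mem_pathOf_card_sub {π : RankOrd α} {s : ℕ} (hs : s ≤ Fintype.card α) {w : α} :
    w ∈ pathOf π (Fintype.card α - s) ↔ (π w : ℕ) < s := by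
  rw [mem_pathOf]
  omega

theorem mem_upper {π : RankOrd α} {x w : α} : w ∈ upper π x ↔ (π x : ℕ) ≤ (π w : ℕ) := by
  simp [upper]

theorem card_upper (π : RankOrd α) (x : α) : #(upper π x) = Fintype.card α - (π x : ℕ) := by
  have : upper π x = (Finset.Ici (π x)).map π.symm.toEmbedding := by
    ext w
    rw [mem_upper, mem_map_equiv, Equiv.symm_symm, mem_Ici, Fin.le_def]
  rw [this, card_map, Fin.card_Ici]

theorem rank_eq_of_upper_eq {π π' : RankOrd α} {x y : α} (hU : upper π x = upper π' y) :
    (π' y : ℕ) = π x := by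
  have := congrArg card hU
  rw [card_upper, card_upper] at this
  have := (π x).isLt
  have := (π' y).isLt
  omega

theorem upper_eq_of_eq_below {π π' : RankOrd α} {t : ℕ}
    (hT : ∀ w, t ≤ (π w : ℕ) ↔ t ≤ (π' w : ℕ)) (hagree : ∀ w, (π w : ℕ) < t → π w = π' w)
    {z : α} (hz : (π z : ℕ) < t) : upper π z = upper π' z := by
  ext w
  rw [mem_upper, mem_upper, ← hagree z hz]
  by_cases hw : t ≤ (π w : ℕ)
  · have := (hT w).1 hw
    omega
  · rw [hagree w (not_le.1 hw)]

theorem pathOf_eq_of_le_iff {π π' : RankOrd α} {t : ℕ} (ht : t ≤ Fintype.card α)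
    (hT : ∀ w, t ≤ (π w : ℕ) ↔ t ≤ (π' w : ℕ)) :
    pathOf π (Fintype.card α - t) = pathOf π' (Fintype.card α - t) := by
  ext w
  rw [mem_pathOf_card_sub ht, mem_pathOf_card_sub ht, ← not_le, ← not_le, hT]

theorem pathOf_ne_of_lt_le {π π' : RankOrd α} {s : ℕ} (hs : s ≤ Fintype.card α) {w : α}
    (h : (π w : ℕ) < s) (h' : s ≤ (π' w : ℕ)) :
    pathOf π (Fintype.card α - s) ≠ pathOf π' (Fintype.card α - s) := fun heq => by
  have hw := (mem_pathOf_card_sub hs).2 h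
  rw [heq, mem_pathOf_card_sub hs] at hw
  omega

theorem exists_pathOf_ne_of_ne {π π' : RankOrd α} {w : α} (h : π w ≠ π' w) {t : ℕ}
    (ht : (π w : ℕ) < t) (ht' : (π' w : ℕ) < t) :
    ∃ k, Fintype.card α - t < k ∧ k ≤ Fintype.card α ∧ pathOf π k ≠ pathOf π' k := by
  have hn := (π w).isLt
  have hn' := (π' w).isLt
  rcases Nat.lt_or_gt_of_ne (Fin.val_ne_of_ne h) with hlt | hlt
  · exact ⟨_, by omega, by omega, pathOf_ne_of_lt_le hn'.le hlt le_rfl⟩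
  · exact ⟨_, by omega, by omega, fun heq => pathOf_ne_of_lt_le hn.le hlt le_rfl heq.symm⟩

theorem exists_eqOn_Icc_and_ne_succ {β : Type*} {f g : ℕ → β} {a k : ℕ} (ha : f a = g a)
    (hak : a < k) (hk : f k ≠ g k) :
    ∃ j, a ≤ j ∧ j < k ∧ (∀ m, a ≤ m → m ≤ j → f m = g m) ∧ f (j + 1) ≠ g (j + 1) := by
  have hex : ∃ m, a < m ∧ f m ≠ g m := ⟨k, hak, hk⟩
  obtain ⟨hK, hKne⟩ := Nat.find_spec hex
  have hKk := Nat.find_min' hex ⟨hak, hk⟩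
  refine ⟨Nat.find hex - 1, by omega, by omega, fun m ham hmj => ?_, ?_⟩
  · rcases ham.eq_or_lt with rfl | ham
    · exact ha
    · by_contra hne
      have := Nat.find_min' hex ⟨ham, hne⟩
      omega
  · rwa [Nat.sub_add_cancel (by omega)]

theorem branchingPair_of_ne_eq_ne {ρ ρ' : ℕ → Finset α} {a k : ℕ} (ha : 1 ≤ a)
    (hk : k ≤ Fintype.card α) (hak : a < k) (hpred : ρ (a - 1) ≠ ρ' (a - 1))
    (heq : ρ a = ρ' a) (hne : ρ k ≠ ρ' k) : BranchingPair ρ ρ' := by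
  obtain ⟨j, haj, hjk, hagree, hsucc⟩ := exists_eqOn_Icc_and_ne_succ heq hak hne
  exact ⟨a, j, ha, haj, by omega, hpred, hsucc, hagree⟩

end

theorem isPath_pathOf (π : RankOrd α) : IsPath (pathOf π) := by
  refine ⟨?_, ?_, fun i hi => ⟨fun w => ?_, card_eq_one.2
    ⟨π.symm ⟨Fintype.card α - i - 1, by omega⟩, ?_⟩⟩⟩
  · ext w
    simp [mem_pathOf]
  · ext w
    simp [mem_pathOf]
  · simp only [mem_pathOf]
    omega
  · ext w
    rw [mem_sdiff, mem_pathOf, mem_pathOf, mem_singleton, Equiv.eq_symm_apply, Fin.ext_iff]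
    dsimp only
    omega

theorem inM_of_mem_pathOf_sdiff {π : RankOrd α} {i : ℕ} {w : α}
    (hw : w ∈ pathOf π i \ pathOf π (i + 1)) : inM π w (pathOf π i) := by
  rw [mem_sdiff, mem_pathOf, mem_pathOf] at hw
  refine ⟨fun u hu => ?_, fun u hu hne => ?_⟩
  · rw [mem_pathOf] at hu
    omega
  · rw [mem_pathOf] at hu
    have : (π u : ℕ) ≠ π w := fun h => hne (π.injective (Fin.ext h))
    omega

theorem sum_powerset_ite_subset_neg_one_pow {β R : Type*} [DecidableEq β] [Ring R]
    {C D : Finset β} (hDC : D ⊆ C) :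
    ∑ B ∈ C.powerset, (if B ⊆ D then (-1 : R) ^ #B else 0) = if D = ∅ then 1 else 0 := by
  have hfilter : C.powerset.filter (· ⊆ D) = D.powerset := by
    ext B
    simpa using fun hBD : B ⊆ D => hBD.trans hDC
  rw [← sum_filter, hfilter]
  simpa using congrArg (Int.cast : ℤ → R) (sum_powerset_neg_one_pow_card (x := D))

theorem sum_superset_eq_sum_powerset_compl {M : Type*} [AddCommMonoid M] (A : Finset α)
    (f : Finset α → M) :
    ∑ A' ∈ univ.powerset.filter (A ⊆ ·), f A' = ∑ B ∈ Aᶜ.powerset, f (A ∪ B) := by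
  have hIcc : univ.powerset.filter (A ⊆ ·) = Icc A univ := by
    ext A'
    simp
  rw [hIcc, Icc_eq_image_powerset (subset_univ A), ← compl_eq_univ_sdiff, sum_image]
  intro B hB B' hB' h
  have hdisj : ∀ {C}, C ∈ Aᶜ.powerset → Disjoint A C := fun hC =>
    disjoint_left.2 fun _ ha hc => mem_compl.1 (mem_powerset.1 hC hc) ha
  rw [← union_sdiff_cancel_left (hdisj hB), ← union_sdiff_cancel_left (hdisj hB')]
  exact congrArg (· \ A) h

theorem isBest_union_iff {τ : RankOrd α} {A B : Finset α} {x : α} (hxB : x ∉ B) :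
    IsBest τ (A ∪ B) x ↔ IsBest τ A x ∧ ∀ y ∈ B, (τ y : ℕ) < (τ x : ℕ) := by
  simp only [IsBest, mem_union, or_imp, forall_and]
  exact and_congr_right'
    ⟨fun h y hy => h y hy (ne_of_mem_of_not_mem hy hxB), fun h y hy _ => h y hy⟩

theorem inM_iff {τ : RankOrd α} {A : Finset α} {x : α} (hx : x ∈ A) :
    inM τ x A ↔ Aᶜ.filter (fun y => (τ y : ℕ) < τ x) = ∅ ∧ IsBest τ A x := by
  rw [filter_eq_empty_iff]
  refine and_congr_left' (forall_congr' fun y => ?_)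
  rw [mem_compl]
  refine imp_congr_right fun hy => ⟨fun h => by omega, fun h => lt_of_le_of_ne (not_lt.1 h) ?_⟩
  exact fun hxy => hy (τ.injective (Fin.ext hxy) ▸ hx)

/-- Möbius inversion for a single order. -/
theorem sum_powerset_compl_isBest_union (τ : RankOrd α) {A : Finset α} {x : α} (hx : x ∈ A)
    (c : ℝ) :
    ∑ B ∈ Aᶜ.powerset, (-1 : ℝ) ^ #B * (if IsBest τ (A ∪ B) x then c else 0)
      = if inM τ x A then c else 0 := by
  set L := Aᶜ.filter (fun y => (τ y : ℕ) < τ x)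
  have hterm : ∀ B ∈ Aᶜ.powerset, (-1 : ℝ) ^ #B * (if IsBest τ (A ∪ B) x then c else 0)
      = (if B ⊆ L then (-1) ^ #B else 0) * (if IsBest τ A x then c else 0) := by
    intro B hB
    have hBA : B ⊆ Aᶜ := mem_powerset.1 hB
    have hbest : IsBest τ (A ∪ B) x ↔ B ⊆ L ∧ IsBest τ A x := by
      rw [isBest_union_iff fun hxB => mem_compl.1 (hBA hxB) hx, and_comm]
      exact and_congr_left' ⟨fun h y hy => mem_filter.2 ⟨hBA hy, h y hy⟩,
        fun h y hy => (mem_filter.1 (h hy)).2⟩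
    by_cases hL : B ⊆ L <;> by_cases hA : IsBest τ A x <;> simp [hbest, hL, hA]
  rw [sum_congr rfl hterm, ← sum_mul, sum_powerset_ite_subset_neg_one_pow (filter_subset _ _)]
  rw [if_congr (inM_iff hx) rfl rfl, ite_and, ite_mul, one_mul, zero_mul]

theorem Rationalizes.bm_eq {P : Finset α → α → ℝ} {ν : RankOrd α → ℝ} (hν : Rationalizes ν P)
    {x : α} {A : Finset α} (hx : x ∈ A) :
    bm P x A = ∑ τ, if inM τ x A then ν τ else 0 := by
  have hdisj : ∀ B ∈ Aᶜ.powerset, (A ∪ B) \ A = B := fun B hB =>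
    union_sdiff_cancel_left (disjoint_left.2 fun _ ha hb => mem_compl.1 (mem_powerset.1 hB hb) ha)
  calc bm P x A = ∑ B ∈ Aᶜ.powerset, (-1 : ℝ) ^ #B * P (A ∪ B) x := by
        rw [bm, sum_superset_eq_sum_powerset_compl]
        exact sum_congr rfl fun B hB => by rw [hdisj B hB]
    _ = ∑ B ∈ Aᶜ.powerset, ∑ τ, (-1 : ℝ) ^ #B * (if IsBest τ (A ∪ B) x then ν τ else 0) := by
        refine sum_congr rfl fun B _ => ?_
        have hxAB := mem_union_left B hx
        rw [hν.2 _ ⟨x, hxAB⟩ x hxAB, choiceProb_eq_sum_isBest, mul_sum]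
    _ = ∑ τ, if inM τ x A then ν τ else 0 := by
        rw [sum_comm]
        exact sum_congr rfl fun τ _ => sum_powerset_compl_isBest_union τ hx (ν τ)

theorem Rationalizes.bm_pos {P : Finset α → α → ℝ} {ν : RankOrd α → ℝ} (hν : Rationalizes ν P)
    {π : RankOrd α} (hπ : 0 < ν π) {x : α} {A : Finset α} (hx : x ∈ A) (hM : inM π x A) :
    0 < bm P x A := by
  rw [hν.bm_eq hx]
  refine sum_pos' (fun τ _ => ?_) ⟨π, mem_univ π, by rwa [if_pos hM]⟩
  split_ifs
  exacts [hν.1.1 τ, le_rfl]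

theorem Rationalizes.supportedPath_pathOf {P : Finset α → α → ℝ} {ν : RankOrd α → ℝ}
    (hν : Rationalizes ν P) {π : RankOrd α} (hπ : 0 < ν π) : SupportedPath P (pathOf π) :=
  ⟨isPath_pathOf π, fun _ _ _ hw => hν.bm_pos hπ (mem_sdiff.1 hw).1 (inM_of_mem_pathOf_sdiff hw)⟩

theorem choiceProb_add (ν μ : RankOrd α → ℝ) (A : Finset α) (x : α) :
    choiceProb (ν + μ) A x = choiceProb ν A x + choiceProb μ A x := by
  simp only [choiceProb_eq_sum_isBest, ← sum_add_distrib, Pi.add_apply]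
  exact sum_congr rfl fun τ _ => by split_ifs <;> simp

theorem choiceProb_sub (ν μ : RankOrd α → ℝ) (A : Finset α) (x : α) :
    choiceProb (ν - μ) A x = choiceProb ν A x - choiceProb μ A x := by
  simp only [choiceProb_eq_sum_isBest, ← sum_sub_distrib, Pi.sub_apply]
  exact sum_congr rfl fun τ _ => by split_ifs <;> simp

theorem choiceProb_single (τ : RankOrd α) (c : ℝ) (A : Finset α) (x : α) :
    choiceProb (Pi.single τ c) A x = if IsBest τ A x then c else 0 := by
  rw [choiceProb_eq_sum_isBest, sum_eq_single τ (fun τ' _ hτ' => by simp [hτ'])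
    (fun h => absurd (mem_univ τ) h)]
  simp

def transferMass (ν : RankOrd α → ℝ) (π π' σ σ' : RankOrd α) (ε : ℝ) : RankOrd α → ℝ :=
  ν + (Pi.single σ ε + Pi.single σ' ε) - (Pi.single π ε + Pi.single π' ε)

theorem isDist_transferMass {ν : RankOrd α → ℝ} (hν : IsDist ν) {π π' : RankOrd α} (hππ' : π ≠ π')
    {ε : ℝ} (hε : 0 ≤ ε) (hεπ : ε ≤ ν π) (hεπ' : ε ≤ ν π') (σ σ' : RankOrd α) :
    IsDist (transferMass ν π π' σ σ' ε) := by
  refine ⟨fun τ => ?_, ?_⟩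
  · have := hν.1 τ
    simp only [transferMass, Pi.add_apply, Pi.sub_apply, Pi.single_apply]
    split_ifs <;> simp_all <;> linarith
  · simp [transferMass, sum_add_distrib, sum_sub_distrib, hν.2]

omit [DecidableEq α] in
theorem transferMass_ne (ν : RankOrd α → ℝ) {π π' σ σ' : RankOrd α} {ε : ℝ} (hε : ε ≠ 0)
    (hππ' : π ≠ π') (hσ : σ ≠ π) (hσ' : σ' ≠ π) : transferMass ν π π' σ σ' ε ≠ ν := by
  intro h
  have := congrFun h π
  simp [transferMass, hσ.symm, hσ'.symm, hππ', hε] at this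

theorem rationalizes_transferMass {P : Finset α → α → ℝ} {ν : RankOrd α → ℝ} (hν : Rationalizes ν P)
    {π π' σ σ' : RankOrd α} (hππ' : π ≠ π') {ε : ℝ} (hε : 0 ≤ ε) (hεπ : ε ≤ ν π)
    (hεπ' : ε ≤ ν π')
    (hswap : ∀ A, ∀ x ∈ A, choiceProb (Pi.single σ ε + Pi.single σ' ε) A x
      = choiceProb (Pi.single π ε + Pi.single π' ε) A x) :
    Rationalizes (transferMass ν π π' σ σ' ε) P :=
  ⟨isDist_transferMass hν.1 hππ' hε hεπ hεπ' σ σ', fun A hA x hx => by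
    rw [transferMass, choiceProb_sub, choiceProb_add, hswap A x hx, add_sub_cancel_right,
      hν.2 A hA x hx]⟩

section
omit [DecidableEq α]

theorem isBest_congr {τ τ' : RankOrd α} {A : Finset α} {x : α} (hx : x ∈ A)
    (h : ∀ w ∈ A, (τ w : ℕ) = τ' w) : IsBest τ A x ↔ IsBest τ' A x := by
  simp only [IsBest, h x hx]
  exact forall₂_congr fun y hy => by rw [h y hy]

theorem IsBest.of_eq_on_top {τ τ' : RankOrd α} {t : ℕ}
    (hT : ∀ w, t ≤ (τ w : ℕ) ↔ t ≤ (τ' w : ℕ)) (heq : ∀ w, t ≤ (τ w : ℕ) → (τ w : ℕ) = τ' w)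
    {A : Finset α} {x : α} (hA : ∃ w ∈ A, t ≤ (τ w : ℕ)) (h : IsBest τ A x) :
    IsBest τ' A x := by
  obtain ⟨w, hwA, hw⟩ := hA
  have hx : t ≤ (τ x : ℕ) := by
    by_cases hwx : w = x
    · exact hwx ▸ hw
    · exact hw.trans (h w hwA hwx).le
  intro y hy hyx
  by_cases hy' : t ≤ (τ y : ℕ)
  · rw [← heq y hy', ← heq x hx]
    exact h y hy hyx
  · have := (hT x).1 hx
    have := mt (hT y).2 hy'
    omega

theorem isBest_iff_of_eq_on_top {τ τ' : RankOrd α} {t : ℕ}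
    (hT : ∀ w, t ≤ (τ w : ℕ) ↔ t ≤ (τ' w : ℕ)) (heq : ∀ w, t ≤ (τ w : ℕ) → (τ w : ℕ) = τ' w)
    {A : Finset α} {x : α} (hA : ∃ w ∈ A, t ≤ (τ w : ℕ)) : IsBest τ A x ↔ IsBest τ' A x :=
  ⟨IsBest.of_eq_on_top hT heq hA, IsBest.of_eq_on_top (fun w => (hT w).symm)
    (fun w hw => (heq w ((hT w).2 hw)).symm) (hA.imp fun w hw => ⟨hw.1, (hT w).1 hw.2⟩)⟩

/-- The order that follows `π'` on the common top segment `{w | t ≤ π w}` and `π` below it. -/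
def splice (π π' : RankOrd α) (t : ℕ) (hT : ∀ w, t ≤ (π w : ℕ) ↔ t ≤ (π' w : ℕ)) :
    RankOrd α :=
  π.trans <| Equiv.Perm.ofSubtype <|
    Equiv.Perm.subtypePerm (p := fun v : Fin (Fintype.card α) => t ≤ (v : ℕ)) (π.symm.trans π')
      fun v => by simpa using (hT (π.symm v)).symm

variable {π π' : RankOrd α} {t : ℕ} (hT : ∀ w, t ≤ (π w : ℕ) ↔ t ≤ (π' w : ℕ))
include hT

theorem splice_apply (w : α) : splice π π' t hT w = if t ≤ (π w : ℕ) then π' w else π w := by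
  simp only [splice, Equiv.trans_apply]
  split_ifs with h
  · rw [Equiv.Perm.ofSubtype_subtypePerm_of_mem (p := fun v : Fin _ => t ≤ (v : ℕ)) _ h,
      Equiv.trans_apply, Equiv.symm_apply_apply]
  · exact Equiv.Perm.ofSubtype_subtypePerm_of_not_mem (p := fun v : Fin _ => t ≤ (v : ℕ)) _ h

theorem le_splice_iff (w : α) : t ≤ (splice π π' t hT w : ℕ) ↔ t ≤ (π w : ℕ) := by
  rw [splice_apply]
  split_ifs with h
  · exact iff_of_true ((hT w).1 h) h
  · rfl

theorem isBest_splice_of_exists {A : Finset α} {x : α} (hA : ∃ w ∈ A, t ≤ (π w : ℕ)) :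
    IsBest (splice π π' t hT) A x ↔ IsBest π' A x :=
  isBest_iff_of_eq_on_top (fun w => (le_splice_iff hT w).trans (hT w))
    (fun w hw => by rw [splice_apply, if_pos ((le_splice_iff hT w).1 hw)])
    (hA.imp fun w hw => ⟨hw.1, (le_splice_iff hT w).2 hw.2⟩)

theorem isBest_splice_of_forall {A : Finset α} {x : α} (hx : x ∈ A)
    (hA : ∀ w ∈ A, (π w : ℕ) < t) : IsBest (splice π π' t hT) A x ↔ IsBest π A x :=
  isBest_congr hx fun w hw => by rw [splice_apply, if_neg (not_le.2 (hA w hw))]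

end

theorem choiceProb_splice_add {π π' : RankOrd α} {t : ℕ}
    (hT : ∀ w, t ≤ (π w : ℕ) ↔ t ≤ (π' w : ℕ)) (ε : ℝ) {A : Finset α} {x : α} (hx : x ∈ A) :
    choiceProb (Pi.single (splice π π' t hT) ε
        + Pi.single (splice π' π t fun w => (hT w).symm) ε) A x
      = choiceProb (Pi.single π ε + Pi.single π' ε) A x := by
  simp only [choiceProb_add, choiceProb_single]
  by_cases hA : ∀ w ∈ A, (π w : ℕ) < t
  · have hA' : ∀ w ∈ A, (π' w : ℕ) < t := fun w hw => not_le.1 (mt (hT w).2 (not_le.2 (hA w hw)))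
    simp only [isBest_splice_of_forall hT hx hA, isBest_splice_of_forall _ hx hA']
  · push Not at hA
    have hA' : ∃ w ∈ A, t ≤ (π' w : ℕ) := hA.imp fun w hw => ⟨hw.1, (hT w).1 hw.2⟩
    simp only [isBest_splice_of_exists hT hA, isBest_splice_of_exists _ hA', add_comm]

theorem Rationalizes.exists_ne_of_splice {P : Finset α → α → ℝ} {ν : RankOrd α → ℝ}
    (hν : Rationalizes ν P) {π π' : RankOrd α} (hπ : 0 < ν π) (hπ' : 0 < ν π') {t : ℕ}
    (hT : ∀ w, t ≤ (π w : ℕ) ↔ t ≤ (π' w : ℕ)) (htop : ∃ w, t ≤ (π w : ℕ) ∧ π w ≠ π' w)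
    (hbot : ∃ w, (π w : ℕ) < t ∧ π w ≠ π' w) : ∃ ν', ν' ≠ ν ∧ Rationalizes ν' P := by
  obtain ⟨u, hu, hππ'u⟩ := htop
  obtain ⟨v, hv, hππ'v⟩ := hbot
  have hππ' : π ≠ π' := fun h => hππ'u (h ▸ rfl)
  have hε : 0 < min (ν π) (ν π') := lt_min hπ hπ'
  have hσ : splice π π' t hT ≠ π := fun h => by
    have := DFunLike.congr_fun h u
    rw [splice_apply, if_pos hu] at this
    exact hππ'u this.symm
  have hσ' : splice π' π t (fun w => (hT w).symm) ≠ π := fun h => by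
    have := DFunLike.congr_fun h v
    rw [splice_apply, if_neg (mt (hT v).2 (not_le.2 hv))] at this
    exact hππ'v this.symm
  exact ⟨_, transferMass_ne ν hε.ne' hππ' hσ hσ', rationalizes_transferMass hν hππ' hε.le
    (min_le_left _ _) (min_le_right _ _) fun A x hx => choiceProb_splice_add hT _ hx⟩

theorem supported_branching_of_contour_conditions_general {α : Type*} [Fintype α] [DecidableEq α]
    (P : Finset α → α → ℝ) (ν : RankOrd α → ℝ) (hν : Rationalizes ν P)
    (π π' : RankOrd α) (hπ : 0 < ν π) (hπ' : 0 < ν π')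
    (x y z : α) (hxy : x ≠ y)
    (h1 : (π z : ℕ) < (π x : ℕ))
    (hz : upper π z ≠ upper π' z) (hU : upper π x = upper π' y) :
    SupportedPath P (pathOf π) ∧ SupportedPath P (pathOf π') ∧
      BranchingPair (pathOf π) (pathOf π') ∧
      ∃ ν' : RankOrd α → ℝ, ν' ≠ ν ∧ Rationalizes ν' P := by
  have hr := rank_eq_of_upper_eq hU
  have hT : ∀ w, (π x : ℕ) ≤ π w ↔ (π x : ℕ) ≤ π' w := fun w => by
    rw [← mem_upper, hU, mem_upper, hr]
  have hx : (π x : ℕ) < π' x :=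
    lt_of_le_of_ne ((hT x).1 le_rfl) fun h => hxy (π'.injective (Fin.ext (hr.trans h).symm))
  obtain ⟨w, hw, hww'⟩ : ∃ w, (π w : ℕ) < π x ∧ π w ≠ π' w := by
    by_contra! hagree
    exact hz (upper_eq_of_eq_below hT hagree h1)
  obtain ⟨k, hak, hkn, hk⟩ :=
    exists_pathOf_ne_of_ne hww' hw (not_le.1 (mt (hT w).2 (not_le.2 hw)))
  have hxn := (π x).isLt
  refine ⟨hν.supportedPath_pathOf hπ, hν.supportedPath_pathOf hπ',
    branchingPair_of_ne_eq_ne (by omega) hkn hak ?_ (pathOf_eq_of_le_iff hxn.le hT) hk,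
    hν.exists_ne_of_splice hπ hπ' hT ⟨x, le_rfl, fun h => hx.ne (congrArg Fin.val h)⟩
      ⟨w, hw, hww'⟩⟩
  rw [Nat.sub_sub]
  exact pathOf_ne_of_lt_le hxn (Nat.lt_succ_self _) hx

/-- Theorem 2, necessity direction: if two orders in the support of a rationalizing `ν`
satisfy the contour-set conditions, then their associated paths form a pair of supported
branching paths, and `ν` is not the unique rationalizing distribution. -/
theorem supported_branching_of_contour_conditions {α : Type*} [Fintype α] [DecidableEq α]
    (P : Finset α → α → ℝ) (ν : RankOrd α → ℝ) (hν : Rationalizes ν P)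
    (π π' : RankOrd α) (hπ : 0 < ν π) (hπ' : 0 < ν π')
    (x y z : α) (hxy : x ≠ y)
    (h1 : (π z : ℕ) < (π x : ℕ)) (h2 : (π z : ℕ) < (π y : ℕ))
    (h3 : (π' z : ℕ) < (π' x : ℕ)) (h4 : (π' z : ℕ) < (π' y : ℕ))
    (hz : upper π z ≠ upper π' z) (hU : upper π x = upper π' y) :
    SupportedPath P (pathOf π) ∧ SupportedPath P (pathOf π') ∧
      BranchingPair (pathOf π) (pathOf π') ∧
      ∃ ν' : RankOrd α → ℝ, ν' ≠ ν ∧ Rationalizes ν' P :=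
  supported_branching_of_contour_conditions_general P ν hν π π' hπ hπ' x y z hxy h1 hz hU
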